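/- Let d ≥ 1 and m_j = ⌈log₂ d_j⌉. Define B_{m,d} = {0, ±1, ±2^{-1/2}, …, ±2^{-m/2}}^d ∩ {u ∈ ℝ^d : ‖u‖ ≤ 1}. Then |B_{m_j,d_j}| ≤ exp((21/4)·d_j). Consequently, for d = d1+d2+d3, |B_{m1,d1}|·|B_{m2,d2}|·|B_{m3,d3}| ≤ e^{(21/4)d}. -/

import Mathlib

noncomputable def enorm {d : ℕ} (u : Fin d → ℝ) : ℝ := Real.sqrt (∑ i, (u i)^2)

def digitBall (m d : ℕ) : Set (Fin d → ℝ) :=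
  {u | _root_.enorm u ≤ 1 ∧
    ∀ i, u i = 0 ∨ ∃ ℓ : ℕ, ℓ ≤ m ∧ |u i| = ((2 : ℝ) ^ ℓ)⁻¹ ^ ((1 : ℝ) / 2)}

/-!
Record each coordinate of a vector in `digitBall m d` as a digit: a level `ℓ ≤ m` with a sign, or
zero. Every vector of the ball is then the coordinatewise value of a digit string `f` with
`∑ᵢ (val fᵢ)² ≤ 1`, and by an exponential-moment (Chernoff) bound with `c = 4d` there are at most
`e^{4d} (∑ₐ e^{-c (val a)²})^d` such strings. Since `e^{-c/2^ℓ} ≤ 2^ℓ/c` and `2^{m+1} ≤ 4d`, the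
one-digit sum is at most `3 ≤ e^{5/4}`.
-/

open Real Finset

theorem card_filter_sum_le_le_exp_mul_pow {α : Type*} [Fintype α] (n : ℕ) (g : α → ℝ) (r : ℝ)
    {c : ℝ} (hc : 0 ≤ c) :
    (#{f : Fin n → α | ∑ i, g (f i) ≤ r} : ℝ) ≤ exp (c * r) * (∑ a, exp (-c * g a)) ^ n := by
  calc (#{f : Fin n → α | ∑ i, g (f i) ≤ r} : ℝ)
      = ∑ f ∈ {f : Fin n → α | ∑ i, g (f i) ≤ r}, 1 := by simp
    _ ≤ ∑ f ∈ {f : Fin n → α | ∑ i, g (f i) ≤ r}, exp (c * (r - ∑ i, g (f i))) := by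
        gcongr with f hf
        exact one_le_exp (mul_nonneg hc (sub_nonneg.2 (mem_filter.1 hf).2))
    _ ≤ ∑ f : Fin n → α, exp (c * (r - ∑ i, g (f i))) :=
        sum_le_sum_of_subset_of_nonneg (filter_subset _ _) fun _ _ _ => (exp_pos _).le
    _ = exp (c * r) * (∑ a, exp (-c * g a)) ^ n := by
        rw [Fintype.sum_pow, mul_sum]
        congr! 1 with f
        rw [← exp_sum, ← exp_add, mul_sub, mul_sum]
        simp only [neg_mul, sum_neg_distrib, sub_eq_add_neg]

abbrev Digit (m : ℕ) := Option (Fin (m + 1) × Bool)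

noncomputable def digitValue {m : ℕ} : Digit m → ℝ
  | none => 0
  | some (ℓ, s) => (if s then 1 else -1) * ((2 : ℝ) ^ (ℓ : ℕ))⁻¹ ^ ((1 : ℝ) / 2)

@[simp] theorem digitValue_none {m : ℕ} : digitValue (none : Digit m) = 0 := rfl

theorem digitValue_some_sq {m : ℕ} (ℓ : Fin (m + 1)) (s : Bool) :
    digitValue (some (ℓ, s)) ^ 2 = ((2 : ℝ) ^ (ℓ : ℕ))⁻¹ := by
  rw [digitValue, mul_pow, ← sqrt_eq_rpow, sq_sqrt (by positivity)]
  cases s <;> simp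

theorem exists_digitValue_eq {m : ℕ} {x : ℝ}
    (hx : x = 0 ∨ ∃ ℓ : ℕ, ℓ ≤ m ∧ |x| = ((2 : ℝ) ^ ℓ)⁻¹ ^ ((1 : ℝ) / 2)) :
    ∃ a : Digit m, digitValue a = x := by
  obtain rfl | ⟨ℓ, hℓ, hx⟩ := hx
  · exact ⟨none, rfl⟩
  · refine ⟨some (⟨ℓ, Nat.lt_succ_of_le hℓ⟩, decide (0 ≤ x)), ?_⟩
    rcases le_or_gt 0 x with h | h
    · simp only [digitValue, decide_eq_true h, if_true, one_mul, ← hx, abs_of_nonneg h]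
    · simp only [digitValue, decide_eq_false h.not_ge, ← hx, abs_of_neg h]
      simp

theorem ncard_digitBall_le_card (m d : ℕ) :
    (digitBall m d).ncard ≤ #{f : Fin d → Digit m | ∑ i, digitValue (f i) ^ 2 ≤ 1} := by
  classical
  have hsub : digitBall m d ⊆
      (({f : Fin d → Digit m | ∑ i, digitValue (f i) ^ 2 ≤ 1} : Finset _).image
        fun f i => digitValue (f i) : Finset (Fin d → ℝ)) := by
    rintro u ⟨hnorm, hdigit⟩
    choose f hf using fun i => exists_digitValue_eq (hdigit i)
    refine mem_image.2 ⟨f, mem_filter.2 ⟨mem_univ _, ?_⟩, funext hf⟩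
    simpa [hf, _root_.enorm] using hnorm
  calc (digitBall m d).ncard ≤ _ := Set.ncard_le_ncard hsub (finite_toSet _)
    _ ≤ _ := by rw [Set.ncard_coe_finset]; exact card_image_le

theorem sum_exp_neg_mul_digitValue_sq (m : ℕ) (c : ℝ) :
    ∑ a : Digit m, exp (-c * digitValue a ^ 2) =
      1 + 2 * ∑ ℓ ∈ range (m + 1), exp (-c / 2 ^ ℓ) := by
  rw [Fintype.sum_option, Fintype.sum_prod_type, mul_sum,
    ← Fin.sum_univ_eq_sum_range (fun ℓ => 2 * exp (-c / 2 ^ ℓ))]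
  simp [digitValue_some_sq, div_eq_mul_inv, two_mul]

theorem sum_range_exp_neg_div_two_pow_le_one {m : ℕ} {c : ℝ} (hc : 2 ^ (m + 1) ≤ c) :
    ∑ ℓ ∈ range (m + 1), exp (-c / 2 ^ ℓ) ≤ 1 := by
  have hc0 : 0 < c := lt_of_lt_of_le (by positivity) hc
  calc ∑ ℓ ∈ range (m + 1), exp (-c / 2 ^ ℓ)
      ≤ ∑ ℓ ∈ range (m + 1), (2 : ℝ) ^ ℓ / c := by
        gcongr with ℓ
        -- `exp (-x) ≤ 1 / x` for `x > 0`
        rw [neg_div, exp_neg, ← inv_div c]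
        exact inv_anti₀ (by positivity) (by linarith [add_one_le_exp (c / 2 ^ ℓ)])
    _ = (2 ^ (m + 1) - 1) / c := by rw [← sum_div, geom_sum_eq (by norm_num)]; norm_num
    _ ≤ 1 := by rw [div_le_one hc0]; linarith

theorem three_le_exp_five_div_four : (3 : ℝ) ≤ exp (5 / 4) := by
  calc (3 : ℝ) ≤ 2.7182818283 * (1 / 4 + 1) := by norm_num
    _ ≤ exp 1 * exp (1 / 4) := by gcongr; exacts [exp_one_gt_d9.le, add_one_le_exp _]
    _ = exp (5 / 4) := by rw [← exp_add]; norm_num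

theorem ncard_digitBall_le {m d : ℕ} (hm : 2 ^ m ≤ 2 * d) :
    ((digitBall m d).ncard : ℝ) ≤ exp (21 / 4 * d) := by
  have hc : (2 : ℝ) ^ (m + 1) ≤ 4 * d := by
    rw [pow_succ]; exact_mod_cast (by omega : 2 ^ m * 2 ≤ 4 * d)
  have hsum : ∑ a : Digit m, exp (-(4 * d) * digitValue a ^ 2) ≤ exp (5 / 4) := by
    rw [sum_exp_neg_mul_digitValue_sq]
    linarith [sum_range_exp_neg_div_two_pow_le_one hc, three_le_exp_five_div_four]
  calc ((digitBall m d).ncard : ℝ)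
      ≤ #{f : Fin d → Digit m | ∑ i, digitValue (f i) ^ 2 ≤ 1} := by
        exact_mod_cast ncard_digitBall_le_card m d
    _ ≤ exp (4 * d * 1) * (∑ a : Digit m, exp (-(4 * d) * digitValue a ^ 2)) ^ d :=
        card_filter_sum_le_le_exp_mul_pow d (fun a => digitValue a ^ 2) 1 (by positivity)
    _ ≤ exp (4 * d * 1) * exp (5 / 4) ^ d := by gcongr
    _ = exp (21 / 4 * d) := by rw [← exp_nat_mul, ← exp_add]; ring_nf

theorem Nat.two_pow_clog_le_two_mul {d : ℕ} (hd : 1 ≤ d) : 2 ^ Nat.clog 2 d ≤ 2 * d := by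
  rcases hd.eq_or_lt with rfl | hd
  · simp
  · have := Nat.pow_pred_clog_lt_self one_lt_two hd
    rw [← Nat.succ_pred_eq_of_pos (Nat.clog_pos one_lt_two hd), pow_succ']
    omega

theorem ncard_digitBall_clog_le (d : ℕ) :
    ((digitBall (Nat.clog 2 d) d).ncard : ℝ) ≤ exp (21 / 4 * d) := by
  rcases Nat.eq_zero_or_pos d with rfl | hd
  · simpa using Set.ncard_le_one_of_subsingleton (digitBall (Nat.clog 2 0) 0)
  · exact ncard_digitBall_le (Nat.two_pow_clog_le_two_mul hd)

theorem digitBall_card_le_general (d1 d2 d3 : ℕ) :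
    (∀ dj : ℕ, 1 ≤ dj →
      ((digitBall (Nat.clog 2 dj) dj).ncard : ℝ) ≤ Real.exp ((21 / 4) * dj)) ∧
    ((digitBall (Nat.clog 2 d1) d1).ncard : ℝ) *
      ((digitBall (Nat.clog 2 d2) d2).ncard : ℝ) *
      ((digitBall (Nat.clog 2 d3) d3).ncard : ℝ)
      ≤ Real.exp ((21 / 4) * (d1 + d2 + d3)) := by
  refine ⟨fun dj _ => ncard_digitBall_clog_le dj, ?_⟩
  calc _ ≤ exp (21 / 4 * d1) * exp (21 / 4 * d2) * exp (21 / 4 * d3) := by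
        gcongr <;> exact ncard_digitBall_clog_le _
    _ = _ := by rw [← exp_add, ← exp_add]; ring_nf

theorem digitBall_card_le (d1 d2 d3 : ℕ) (h1 : 1 ≤ d1) (h2 : 1 ≤ d2) (h3 : 1 ≤ d3) :
    (∀ dj : ℕ, 1 ≤ dj →
      ((digitBall (Nat.clog 2 dj) dj).ncard : ℝ) ≤ Real.exp ((21 / 4) * dj)) ∧
    ((digitBall (Nat.clog 2 d1) d1).ncard : ℝ) *
      ((digitBall (Nat.clog 2 d2) d2).ncard : ℝ) *
      ((digitBall (Nat.clog 2 d3) d3).ncard : ℝ)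
      ≤ Real.exp ((21 / 4) * (d1 + d2 + d3)) :=
  digitBall_card_le_general d1 d2 d3
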